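/- arXiv:1603.04690 — 3 statements merged into one kernel-verified Lean document; each statement's English description precedes it below -/
import Mathlib

section
/- Suppose nonnegative reals C'_k, p_j (j ∈ N, N a finite set), and η_j ∈ [0,1] satisfy C'_k ≥ Σ_{j∈N} η_j p_j/2, and for every α ∈ (0,1] a number C_k^α satisfies C_k^α ≤ C'_k + Σ_{j: η_j ≥ α} (1 + (α−η_j)/2) p_j. Then the expectation of C_k^α when α is drawn from (0,1] with density f(α) = e^(α/2)/(2(√e−1)) is at most (√e/(√e−1)) · C'_k. -/
/-!
Bound `C_k^α` by its majorant and integrate against the density `e^(α/2) / (2(√e - 1))`.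
The density is chosen so that each job contributes exactly `η_j p_j / (2(√e - 1))`:
`e^(α/2) (α - η)` is an antiderivative of `e^(α/2) (1 + (α - η)/2)` vanishing at `α = η`, so
`∫₀^η e^(α/2) (1 + (α - η)/2) dα = η`. The expectation is therefore at most
`C'_k + (Σ_j η_j p_j / 2) / (√e - 1) ≤ (1 + 1/(√e - 1)) C'_k`.
-/

open Real Set MeasureTheory

noncomputable def alphaPointBound {ι : Type*} (N : Finset ι) (p η : ι → ℝ) (C α : ℝ) : ℝ :=
  C + ∑ j ∈ N with α ≤ η j, (1 + (α - η j) / 2) * p j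

lemma one_lt_sqrt_exp_one : 1 < √(exp 1) := by
  rw [← exp_half, one_lt_exp_iff]
  norm_num

lemma integral_exp_half (c : ℝ) : ∫ x in (0 : ℝ)..c, exp (x / 2) = 2 * (exp (c / 2) - 1) := by
  simp [intervalIntegral.integral_comp_div, integral_exp]

lemma integral_exp_half_mul_one_add_sub_div_two (c : ℝ) :
    ∫ x in (0 : ℝ)..c, exp (x / 2) * (1 + (x - c) / 2) = c := by
  have hderiv : ∀ x ∈ uIcc 0 c,
      HasDerivAt (fun x => exp (x / 2) * (x - c)) (exp (x / 2) * (1 + (x - c) / 2)) x :=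
    fun x _ => ((((hasDerivAt_id' x).div_const 2).exp).mul
      ((hasDerivAt_id' x).sub_const c)).congr_deriv (by ring)
  rw [intervalIntegral.integral_eq_sub_of_hasDerivAt hderiv
    (Continuous.intervalIntegrable (by fun_prop) _ _)]
  simp

lemma Continuous.intervalIntegrable_indicator_Iic {g : ℝ → ℝ} (hg : Continuous g)
    (c a b : ℝ) : IntervalIntegrable ({x | x ≤ c}.indicator g) volume a b := by
  rw [intervalIntegrable_iff]
  exact hg.integrableOn_uIoc.indicator measurableSet_Iic

lemma intervalIntegrable_sum_indicator_Iic {ι : Type*} (N : Finset ι) {g : ι → ℝ → ℝ}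
    (hg : ∀ j ∈ N, Continuous (g j)) (c : ι → ℝ) (a b : ℝ) :
    IntervalIntegrable (fun x => ∑ j ∈ N, {x | x ≤ c j}.indicator (g j) x) volume a b := by
  rw [← Finset.sum_fn]
  exact IntervalIntegrable.sum N fun j hj => (hg j hj).intervalIntegrable_indicator_Iic _ _ _

section AlphaPointBound

variable {ι : Type*} (N : Finset ι) (p η : ι → ℝ) (C : ℝ)

lemma exp_half_mul_alphaPointBound (α : ℝ) :
    exp (α / 2) * alphaPointBound N p η C α = exp (α / 2) * C +
      ∑ j ∈ N, {x | x ≤ η j}.indicator (fun x => exp (x / 2) * ((1 + (x - η j) / 2) * p j)) α := by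
  simp only [alphaPointBound, Finset.sum_filter, mul_add, Finset.mul_sum, indicator_apply,
    mem_ofPred_eq]
  congr 1
  refine Finset.sum_congr rfl fun j _ => ?_
  split_ifs <;> simp

lemma intervalIntegrable_exp_half_mul_alphaPointBound (a b : ℝ) :
    IntervalIntegrable (fun α => exp (α / 2) * alphaPointBound N p η C α) volume a b := by
  simp_rw [exp_half_mul_alphaPointBound]
  exact (Continuous.intervalIntegrable (by fun_prop) _ _).add
    (intervalIntegrable_sum_indicator_Iic N (fun _ _ => by fun_prop) _ _ _)

lemma integral_exp_half_mul_alphaPointBound (hη : ∀ j ∈ N, η j ∈ Icc (0 : ℝ) 1) :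
    ∫ α in (0 : ℝ)..1, exp (α / 2) * alphaPointBound N p η C α
      = 2 * (√(exp 1) - 1) * C + ∑ j ∈ N, η j * p j := by
  simp_rw [exp_half_mul_alphaPointBound]
  rw [intervalIntegral.integral_add (Continuous.intervalIntegrable (by fun_prop) _ _)
      (intervalIntegrable_sum_indicator_Iic N (fun _ _ => by fun_prop) _ _ _),
    intervalIntegral.integral_finsetSum fun _ _ =>
      Continuous.intervalIntegrable_indicator_Iic (by fun_prop) _ _ _]
  congr 1
  · rw [intervalIntegral.integral_mul_const, integral_exp_half, exp_half]
  · refine Finset.sum_congr rfl fun j hj => ?_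
    simp_rw [intervalIntegral.integral_indicator (hη j hj), ← mul_assoc,
      intervalIntegral.integral_mul_const, integral_exp_half_mul_one_add_sub_div_two]

end AlphaPointBound

theorem expected_completion_time_bound_general {ι : Type*} (N : Finset ι)
    (p η : ι → ℝ) (C' : ℝ) (Ck : ℝ → ℝ)
    (hη : ∀ j ∈ N, η j ∈ Set.Icc (0:ℝ) 1)
    (hlb : ∑ j ∈ N, η j * p j / 2 ≤ C')
    (hub : ∀ α ∈ Set.Ioc (0:ℝ) 1,
      Ck α ≤ C' + ∑ j ∈ N.filter (fun j => α ≤ η j), (1 + (α - η j) / 2) * p j)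
    (hint : IntervalIntegrable
      (fun α => (Real.exp (α / 2) / (2 * (Real.sqrt (Real.exp 1) - 1))) * Ck α)
      MeasureTheory.volume 0 1) :
    ∫ α in (0:ℝ)..1, (Real.exp (α / 2) / (2 * (Real.sqrt (Real.exp 1) - 1))) * Ck α
      ≤ (Real.sqrt (Real.exp 1) / (Real.sqrt (Real.exp 1) - 1)) * C' := by
  have hs := one_lt_sqrt_exp_one
  set s := √(exp 1)
  calc ∫ α in (0:ℝ)..1, exp (α / 2) / (2 * (s - 1)) * Ck α
      ≤ ∫ α in (0:ℝ)..1, exp (α / 2) * alphaPointBound N p η C' α / (2 * (s - 1)) := by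
        refine intervalIntegral.integral_mono_on_of_le_Ioo zero_le_one hint
          ((intervalIntegrable_exp_half_mul_alphaPointBound N p η C' 0 1).div_const _)
          fun α hα => ?_
        rw [mul_div_right_comm]
        exact mul_le_mul_of_nonneg_left (hub α (Ioo_subset_Ioc_self hα)) (by positivity)
    _ = (2 * (s - 1) * C' + ∑ j ∈ N, η j * p j) / (2 * (s - 1)) := by
        rw [intervalIntegral.integral_div, integral_exp_half_mul_alphaPointBound N p η C' hη]
    _ ≤ s / (s - 1) * C' := by
        rw [← Finset.sum_div] at hlb
        have hs1 : 0 < s - 1 := by linarith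
        rw [div_le_iff₀ (by positivity)]
        field_simp
        linarith

theorem expected_completion_time_bound {ι : Type*} (N : Finset ι)
    (p η : ι → ℝ) (C' : ℝ) (Ck : ℝ → ℝ)
    (hC' : 0 ≤ C') (hp : ∀ j ∈ N, 0 ≤ p j)
    (hη : ∀ j ∈ N, η j ∈ Set.Icc (0:ℝ) 1)
    (hlb : ∑ j ∈ N, η j * p j / 2 ≤ C')
    (hub : ∀ α ∈ Set.Ioc (0:ℝ) 1,
      Ck α ≤ C' + ∑ j ∈ N.filter (fun j => α ≤ η j), (1 + (α - η j) / 2) * p j)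
    (hint : IntervalIntegrable
      (fun α => (Real.exp (α / 2) / (2 * (Real.sqrt (Real.exp 1) - 1))) * Ck α)
      MeasureTheory.volume 0 1) :
    ∫ α in (0:ℝ)..1, (Real.exp (α / 2) / (2 * (Real.sqrt (Real.exp 1) - 1))) * Ck α
      ≤ (Real.sqrt (Real.exp 1) / (Real.sqrt (Real.exp 1) - 1)) * C' :=
  expected_completion_time_bound_general N p η C' Ck hη hlb hub hint
end

section
/- Consider a single machine schedule (a measurable assignment of at most one job to each time point) for jobs N with processing times p_j > 0, release dates r_j ≥ 0, where each job j receives total processing p_j, none before r_j. Let C_j be the completion time (mean busy time) of job j. Then for every nonempty subset S ⊆ N: (1/p(S))·Σ_{j∈S} p_j C_j ≥ r_min(S) + p(S)/2, where p(S) = Σ_{j∈S} p_j and r_min(S) = min_{j∈S} r_j. -/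
/-!
The jobs of `S` together occupy a set `A ⊆ [r_min(S), ∞)` of measure `p(S)`, and
`∑_{j ∈ S} p_j C_j = ∫_A t dt`. Among all such sets, `∫_A t dt` is smallest for the interval
`[r_min(S), r_min(S) + p(S)]`: trading the part of `A` beyond that interval for the missing part
of the interval, a set of the same measure, only moves mass to earlier times.
-/

open MeasureTheory

theorem setIntegral_le_of_measure_eq_of_le_on_sdiff {X : Type*} [MeasurableSpace X]
    {μ : Measure X} {f : X → ℝ} {A B : Set X} {c : ℝ}
    (hA : MeasurableSet A) (hB : MeasurableSet B) (hμ : μ A = μ B) (hfin : μ A ≠ ⊤)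
    (hfA : IntegrableOn f A μ) (hfB : IntegrableOn f B μ)
    (hge : ∀ x ∈ A \ B, c ≤ f x) (hle : ∀ x ∈ B \ A, f x ≤ c) :
    ∫ x in B, f x ∂μ ≤ ∫ x in A, f x ∂μ := by
  have hsdiff : μ.real (B \ A) = μ.real (A \ B) := by
    rw [Measure.real, Measure.real, measure_sdiff_symm hA.nullMeasurableSet hB.nullMeasurableSet
      hμ (measure_ne_top_of_subset Set.inter_subset_left hfin)]
  have hBA : ∫ x in B \ A, f x ∂μ ≤ c * μ.real (A \ B) := by
    have hfin' : μ (B \ A) ≠ ⊤ := measure_ne_top_of_subset Set.sdiff_subset (hμ ▸ hfin)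
    calc ∫ x in B \ A, f x ∂μ ≤ ∫ _ in B \ A, c ∂μ :=
          setIntegral_mono_on (hfB.mono_set Set.sdiff_subset) (integrableOn_const hfin')
            (hB.diff hA) hle
      _ = c * μ.real (A \ B) := by rw [setIntegral_const, smul_eq_mul, mul_comm, hsdiff]
  have hAB : c * μ.real (A \ B) ≤ ∫ x in A \ B, f x ∂μ :=
    setIntegral_ge_of_const_le_real (hA.diff hB)
      (measure_ne_top_of_subset Set.sdiff_subset hfin) hge (hfA.mono_set Set.sdiff_subset)
  rw [← integral_inter_add_sdiff hA hfB, ← integral_inter_add_sdiff hB hfA, Set.inter_comm]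
  linarith

theorem le_setIntegral_id_of_subset_Ici {A : Set ℝ} {a m : ℝ} (hA : MeasurableSet A)
    (hm : 0 ≤ m) (hvol : volume A = ENNReal.ofReal m) (hsub : A ⊆ Set.Ici a)
    (hint : IntegrableOn id A) :
    a * m + m ^ 2 / 2 ≤ ∫ t in A, t := by
  have hI : ∫ t in Set.Icc a (a + m), t = a * m + m ^ 2 / 2 := by
    rw [integral_Icc_eq_integral_Ioc, ← intervalIntegral.integral_of_le (by linarith), integral_id]
    ring
  rw [← hI]
  refine setIntegral_le_of_measure_eq_of_le_on_sdiff (c := a + m) hA measurableSet_Icc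
    (by rw [hvol, Real.volume_Icc, add_sub_cancel_left]) (hvol ▸ ENNReal.ofReal_ne_top) hint
    continuous_id.integrableOn_Icc ?_ fun t ht => ht.1.2
  intro t ⟨htA, htI⟩
  by_contra! h
  exact htI ⟨hsub htA, h.le⟩

theorem LP_parallel_constraint_valid_general {ι : Type*}
    (p r : ι → ℝ) (hp : ∀ j, 0 < p j)
    (sched : ℝ → Option ι)
    (hmeas : ∀ j, MeasurableSet {t : ℝ | sched t = some j})
    (hdur : ∀ j, volume {t : ℝ | sched t = some j} = ENNReal.ofReal (p j))
    (hrel : ∀ j t, sched t = some j → r j ≤ t)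
    (hint : ∀ j, IntegrableOn id {t : ℝ | sched t = some j})
    (C : ι → ℝ)
    (hC : ∀ j, C j = (∫ t in {t : ℝ | sched t = some j}, t) / p j)
    (S : Finset ι) (hS : S.Nonempty) :
    S.inf' hS r + (∑ j ∈ S, p j) / 2 ≤ (∑ j ∈ S, p j * C j) / (∑ j ∈ S, p j) := by
  set A := ⋃ j ∈ S, {t : ℝ | sched t = some j}
  have hdisj : (S : Set ι).PairwiseDisjoint fun j => {t : ℝ | sched t = some j} :=
    fun i _ j _ hij => Set.disjoint_left.2 fun t hi hj => hij (Option.some_injective _ (hi ▸ hj))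
  have hvol : volume A = ENNReal.ofReal (∑ j ∈ S, p j) := by
    rw [measure_biUnion_finset hdisj fun j _ => hmeas j,
      ENNReal.ofReal_sum_of_nonneg fun j _ => (hp j).le]
    exact Finset.sum_congr rfl fun j _ => hdur j
  have hsub : A ⊆ Set.Ici (S.inf' hS r) := by
    simp only [A, Set.iUnion_subset_iff]
    exact fun j hj t ht => (S.inf'_le r hj).trans (hrel j t ht)
  have hsum : ∫ t in A, t = ∑ j ∈ S, p j * C j := by
    rw [integral_biUnion_finset (f := fun t => t) S (fun j _ => hmeas j) hdisj fun j _ => hint j]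
    exact Finset.sum_congr rfl fun j _ => by rw [hC j, mul_div_cancel₀ _ (hp j).ne']
  have hbound := le_setIntegral_id_of_subset_Ici (S.measurableSet_biUnion fun j _ => hmeas j)
    (S.sum_nonneg fun j _ => (hp j).le) hvol hsub (integrableOn_finset_iUnion.2 fun j _ => hint j)
  rw [hsum] at hbound
  rw [le_div_iff₀ (S.sum_pos (fun j _ => hp j) hS)]
  linarith

/-- Validity of the LP constraint (2): for any feasible preemptive single-machine
schedule (given as a measurable assignment of at most one job to each time point),
the mean busy times satisfy the parallel inequality. -/
theorem LP_parallel_constraint_valid {ι : Type*} [Fintype ι]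
    (p r : ι → ℝ) (hp : ∀ j, 0 < p j) (hr : ∀ j, 0 ≤ r j)
    (sched : ℝ → Option ι)
    (hmeas : ∀ j, MeasurableSet {t : ℝ | sched t = some j})
    (hdur : ∀ j, volume {t : ℝ | sched t = some j} = ENNReal.ofReal (p j))
    (hrel : ∀ j t, sched t = some j → r j ≤ t)
    (hint : ∀ j, IntegrableOn id {t : ℝ | sched t = some j})
    (C : ι → ℝ)
    (hC : ∀ j, C j = (∫ t in {t : ℝ | sched t = some j}, t) / p j)
    (S : Finset ι) (hS : S.Nonempty) :
    S.inf' hS r + (∑ j ∈ S, p j) / 2 ≤ (∑ j ∈ S, p j * C j) / (∑ j ∈ S, p j) :=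
  LP_parallel_constraint_valid_general p r hp sched hmeas hdur hrel hint C hC S hS
end

section
/- Let C*_1 ≤ … ≤ C*_n be a feasible solution of the LP relaxation (satisfying C*_j ≤ C*_k whenever j ≺ k, and (1/p(S))·Σ_{j∈S} p_j C*_j ≥ r_min(S) + p(S)/2 for all nonempty S), with the index order extending ≺. Then the preemptive list schedule in index order on a double-speed machine has completion times C'_j ≤ C*_j for all j. -/
open MeasureTheory

/-- Amount of machine time devoted by `sched` to job `j` strictly before time `t`. -/
noncomputable def workDone {n : ℕ} (sched : ℝ → Option (Fin n)) (j : Fin n) (t : ℝ) : ℝ :=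
  (MeasureTheory.volume ({s : ℝ | sched s = some j} ∩ Set.Ico 0 t)).toReal

/-- Lemma 1 of the paper: given a feasible LP solution `Cstar` (indexed consistently
with the precedence order), the preemptive list schedule in index order on a
double-speed machine completes every job `j` by time `Cstar j`. -/
theorem preemptive_list_schedule_double_speed (n : ℕ) (p r : Fin n → ℝ)
    (hp : ∀ i, 0 < p i) (hr : ∀ i, 0 ≤ r i)
    (prec : Fin n → Fin n → Prop)
    (hprec_idx : ∀ i k, prec i k → i < k)
    (hprec_rel : ∀ i k, prec i k → r i ≤ r k)
    (Cstar : Fin n → ℝ)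
    (hmono : Monotone Cstar)
    (hprecC : ∀ i k, prec i k → Cstar i ≤ Cstar k)
    (hLP : ∀ (S : Finset (Fin n)) (hS : S.Nonempty),
      S.inf' hS r + (∑ i ∈ S, p i) / 2 ≤ (∑ i ∈ S, p i * Cstar i) / (∑ i ∈ S, p i))
    (sched : ℝ → Option (Fin n))
    (hmeas : ∀ i, MeasurableSet {s : ℝ | sched s = some i})
    -- list-scheduling rule: a scheduled job is released, unfinished, and every
    -- lower-indexed released job is already finished
    (hrule : ∀ t i, sched t = some i →
      r i ≤ t ∧ workDone sched i t < p i / 2 ∧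
      ∀ i', i' < i → r i' ≤ t → p i' / 2 ≤ workDone sched i' t)
    -- the machine is never idle while some released job is unfinished
    (hbusy : ∀ t, 0 ≤ t → (∃ i, r i ≤ t ∧ workDone sched i t < p i / 2) →
      ∃ i, sched t = some i)
    (C' : Fin n → ℝ)
    (hC' : ∀ i, workDone sched i (C' i) = p i / 2 ∧
      ∀ t, t < C' i → workDone sched i t < p i / 2) :
    ∀ j, C' j ≤ Cstar j := by
  classical
  intro j
  obtain ⟨hTeq, hTlt⟩ := hC' j
  set T := C' j with hTdef
  -- finiteness of the relevant measures
  have hfin : ∀ (i : Fin n) (t : ℝ),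
      volume ({u : ℝ | sched u = some i} ∩ Set.Ico 0 t) ≠ ⊤ := by
    intro i t
    have h1 : volume ({u : ℝ | sched u = some i} ∩ Set.Ico 0 t) ≤ volume (Set.Ico 0 t) :=
      measure_mono Set.inter_subset_right
    exact ne_top_of_le_ne_top (by simp [Real.volume_Ico]) h1
  -- monotonicity of workDone in time
  have hmono_t : ∀ (i : Fin n) {t t' : ℝ}, t ≤ t' → workDone sched i t ≤ workDone sched i t' := by
    intro i t t' htt
    exact ENNReal.toReal_mono (hfin i t')
      (measure_mono (Set.inter_subset_inter_right _ (Set.Ico_subset_Ico_right htt)))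
  -- workDone never exceeds p i / 2
  have hub : ∀ (i : Fin n) (t : ℝ), workDone sched i t ≤ p i / 2 := by
    intro i t
    have hsub : {u : ℝ | sched u = some i} ⊆ Set.Iio (C' i) := by
      intro u hu
      by_contra hge
      have hge' : C' i ≤ u := not_lt.mp hge
      have h1 := (hrule u i hu).2.1
      have h2 := hmono_t i hge' 
      rw [(hC' i).1] at h2
      linarith
    have hm : volume ({u : ℝ | sched u = some i} ∩ Set.Ico 0 t)
        ≤ volume ({u : ℝ | sched u = some i} ∩ Set.Ico 0 (C' i)) := by
      apply measure_mono
      rintro u ⟨hu1, hu2, _⟩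
      exact ⟨hu1, hu2, hsub hu1⟩
    calc workDone sched i t ≤ workDone sched i (C' i) :=
          ENNReal.toReal_mono (hfin i (C' i)) hm
      _ = p i / 2 := (hC' i).1
  have hT0 : 0 < T := by
    by_contra hT
    push_neg at hT
    have hIco : Set.Ico (0:ℝ) T = ∅ := Set.Ico_eq_empty (not_lt.mpr hT)
    have hz : workDone sched j T = 0 := by
      simp [workDone, hIco]
    rw [hTeq] at hz
    linarith [hp j]
  -- the set of "bad" times before T
  set K := {t : ℝ | t < T ∧ ∀ i : Fin n, i ≤ j → r i ≤ t → p i / 2 ≤ workDone sched i t}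
    with hKdef
  have hKne : K.Nonempty :=
    ⟨-1, by linarith, fun i _ hri => absurd (le_trans (hr i) hri) (by norm_num)⟩
  have hKbdd : BddAbove K := ⟨T, fun t ht => ht.1.le⟩
  set s0 := sSup K with hs0def
  have hs0T : s0 ≤ T := csSup_le hKne (fun t ht => ht.1.le)
  have hs00 : 0 ≤ s0 := by
    by_contra h
    push_neg at h
    have hmem : s0 / 2 ∈ K :=
      ⟨by linarith, fun i _ hri => absurd (le_trans (hr i) hri) (by linarith)⟩
    have := le_csSup hKbdd hmem
    linarith
  have hrS1 : ∀ i : Fin n, i ≤ j → workDone sched i s0 < p i / 2 → s0 ≤ r i := by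
    intro i hij hwi
    by_contra h
    push_neg at h
    obtain ⟨t, htK, hrt⟩ := exists_lt_of_lt_csSup hKne h
    have hts : t ≤ s0 := le_csSup hKbdd htK
    have h1 := htK.2 i hij hrt.le
    have h2 := hmono_t i hts
    linarith
  have hrj : s0 ≤ r j := by
    by_contra h
    push_neg at h
    obtain ⟨t, htK, hrt⟩ := exists_lt_of_lt_csSup hKne h
    have h1 := htK.2 j le_rfl hrt.le
    have h2 := hTlt t htK.1
    linarith
  -- the relevant job set
  set S : Finset (Fin n) := Finset.univ.filter
    (fun i => i ≤ j ∧ (i = j ∨ ∃ t, t ∈ Set.Ico s0 T ∧ sched t = some i)) with hSdef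
  have hjS : j ∈ S := by simp [hSdef]
  have hmemS : ∀ i ∈ S, i ≤ j ∧ (i = j ∨ ∃ t, t ∈ Set.Ico s0 T ∧ sched t = some i) :=
    fun i hi => (Finset.mem_filter.mp hi).2
  have hrS : ∀ i ∈ S, s0 ≤ r i := by
    intro i hi
    rcases (hmemS i hi).2 with rfl | ⟨u, ⟨hus, huT⟩, hu⟩
    · exact hrj
    · refine hrS1 i (hmemS i hi).1 ?_
      have h1 := (hrule u i hu).2.1
      have h2 := hmono_t i hus
      linarith
  -- on (s0, T) the machine works on jobs of S
  have hcover : Set.Ioo s0 T ⊆ ⋃ i ∈ S, ({u : ℝ | sched u = some i} ∩ Set.Ico 0 T) := by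
    intro t ht
    have ht0 : 0 ≤ t := le_of_lt (lt_of_le_of_lt hs00 ht.1)
    have htK : t ∉ K := fun htK => absurd (le_csSup hKbdd htK) (not_le.mpr ht.1)
    have hbad : ∃ i : Fin n, i ≤ j ∧ r i ≤ t ∧ workDone sched i t < p i / 2 := by
      by_contra h
      push_neg at h
      exact htK ⟨ht.2, fun i hij hri => h i hij hri⟩
    obtain ⟨i, hij, hri, hwi⟩ := hbad
    obtain ⟨k, hk⟩ := hbusy t ht0 ⟨i, hri, hwi⟩
    obtain ⟨hrk, hwk, hall⟩ := hrule t k hk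
    have hkj : k ≤ j := by
      by_contra hlt
      push_neg at hlt
      exact absurd (hall i (lt_of_le_of_lt hij hlt) hri) (not_le.mpr hwi)
    have hkS : k ∈ S := by
      simp only [hSdef, Finset.mem_filter, Finset.mem_univ, true_and]
      exact ⟨hkj, Or.inr ⟨t, ⟨ht.1.le, ht.2⟩, hk⟩⟩
    exact Set.mem_iUnion₂.mpr ⟨k, hkS, ⟨hk, ht0, ht.2⟩⟩
  -- the measure estimate
  have hmeasure : T - s0 ≤ (∑ i ∈ S, p i) / 2 := by
    have h1 : volume (Set.Ioo s0 T)
        ≤ ∑ i ∈ S, volume ({u : ℝ | sched u = some i} ∩ Set.Ico 0 T) :=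
      le_trans (measure_mono hcover) (measure_biUnion_finset_le _ _)
    have h2 : ∀ i ∈ S, volume ({u : ℝ | sched u = some i} ∩ Set.Ico 0 T)
        ≤ ENNReal.ofReal (p i / 2) := by
      intro i _
      rw [← ENNReal.ofReal_toReal (hfin i T)]
      exact ENNReal.ofReal_le_ofReal (hub i T)
    have hsum0 : (0:ℝ) ≤ ∑ i ∈ S, p i / 2 :=
      Finset.sum_nonneg fun i _ => by linarith [hp i]
    have h3 : volume (Set.Ioo s0 T) ≤ ENNReal.ofReal (∑ i ∈ S, p i / 2) := by
      calc volume (Set.Ioo s0 T) ≤ ∑ i ∈ S, ENNReal.ofReal (p i / 2) :=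
            le_trans h1 (Finset.sum_le_sum h2)
        _ = ENNReal.ofReal (∑ i ∈ S, p i / 2) :=
            (ENNReal.ofReal_sum_of_nonneg (fun i _ => by linarith [hp i])).symm
    rw [Real.volume_Ioo] at h3
    have h4 : T - s0 ≤ ∑ i ∈ S, p i / 2 :=
      (ENNReal.ofReal_le_ofReal_iff hsum0).mp h3
    rw [Finset.sum_div]
    exact h4
  have hne : S.Nonempty := ⟨j, hjS⟩
  have hpS : 0 < ∑ i ∈ S, p i := Finset.sum_pos (fun i _ => hp i) hne
  have hinf : s0 ≤ S.inf' hne r := Finset.le_inf' hne r hrS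
  have hLPS := hLP S hne
  have hnum : (∑ i ∈ S, p i * Cstar i) ≤ (∑ i ∈ S, p i) * Cstar j := by
    rw [Finset.sum_mul]
    exact Finset.sum_le_sum fun i hi =>
      mul_le_mul_of_nonneg_left (hmono (hmemS i hi).1) (hp i).le
  have hdiv : (∑ i ∈ S, p i * Cstar i) / (∑ i ∈ S, p i) ≤ Cstar j := by
    rw [div_le_iff₀ hpS]
    linarith [hnum]
  linarith [hmeasure, hinf, hLPS, hdiv]
end
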